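/- arXiv:2101.01402 — 3 statements merged into one kernel-verified Lean document; each statement's English description precedes it below -/
import Mathlib

section
/- Let η be a chain of torsion classes in an abelian length category A. Then every nonzero object M of A admits a Harder-Narasimhan filtration 0 = M_0 ⊂ M_1 ⊂ ... ⊂ M_n = M with successive quotients M_k/M_{k-1} ∈ P_{r_k} for strictly decreasing parameters r_1 > r_2 > ... > r_n in [0,1], and this filtration is unique up to isomorphism. -/
/-!
Let `ρ(X) = phase η X = sup {s | X ∈ η s}`. The last step of an HN filtration of `X` must
be the torsion part of `X` for the torsion class `⋃_{s > ρ(X)} η s`: the parameters of the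
lower steps exceed the last one, which is forced to equal `ρ(X)`. Torsion parts exist (take a
maximal subobject in the class, using that subobject lattices are well founded) and are
unique up to isomorphism, so induction on the length of the filtration gives uniqueness.
Conversely the torsion-free quotient of `X` lies in `P_{ρ(X)}`, and recursing on the
torsion part, a proper subobject, builds the filtration.
-/

open CategoryTheory CategoryTheory.Limits

universe w v u u' v' uG

set_option linter.dupNamespace false

namespace TorsionPaper

variable (A : Type u) [Category.{v} A] [Abelian A]
/-- `0 → X → Y → Z → 0` is a short exact sequence. -/
def SES {X Y Z : A} (f : X ⟶ Y) (g : Y ⟶ Z) : Prop :=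
  ∃ h : f ≫ g = 0, (ShortComplex.mk f g h).ShortExact

/-- Exactness at the middle object of `X → Y → Z`. -/
def IsExactAt {X Y Z : A} (f : X ⟶ Y) (g : Y ⟶ Z) : Prop :=
  ∃ h : f ≫ g = 0, (ShortComplex.mk f g h).Exact

/-- A class of objects closed under quotient objects. -/
def ClosedUnderQuotients (T : Set A) : Prop :=
  ∀ ⦃X Y : A⦄ (p : X ⟶ Y), Epi p → X ∈ T → Y ∈ T

/-- A class of objects closed under extensions. -/
def ClosedUnderExtensions (T : Set A) : Prop :=
  ∀ ⦃X Y Z : A⦄ (f : X ⟶ Y) (g : Y ⟶ Z), SES A f g → X ∈ T → Z ∈ T → Y ∈ T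

/-- Torsion classes: full subcategories closed under quotients and extensions. -/
def IsTorsionClass (T : Set A) : Prop :=
  ClosedUnderQuotients A T ∧ ClosedUnderExtensions A T

/-- The right Hom-perpendicular class of a class of objects. -/
def rperp (T : Set A) : Set A := {Y | ∀ X ∈ T, ∀ f : X ⟶ Y, f = 0}

/-- `(T, F)` is a torsion pair: no nonzero maps from `T` to `F`, and every object has
a short exact sequence with torsion subobject in `T` and torsion-free quotient in `F`. -/
def IsTorsionPair (T F : Set A) : Prop :=
  (∀ X ∈ T, ∀ Y ∈ F, ∀ f : X ⟶ Y, f = 0) ∧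
  ∀ M : A, ∃ (tM fM : A) (i : tM ⟶ M) (p : M ⟶ fM),
    tM ∈ T ∧ fM ∈ F ∧ SES A i p

/-- Quotients of objects of `X`. -/
def Fac (X : Set A) : Set A := {Y | ∃ Z ∈ X, ∃ p : Z ⟶ Y, Epi p}

/-- Subobjects of objects of `X`. -/
def SubOf (X : Set A) : Set A := {Y | ∃ Z ∈ X, ∃ i : Y ⟶ Z, Mono i}

/-- Objects admitting a finite filtration with successive quotients in `Y`. -/
def Filt (Y : Set A) : Set A :=
  {M | ∃ (nn : ℕ) (obj : ℕ → A) (map : ∀ i, obj i ⟶ obj (i + 1)),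
    IsZero (obj 0) ∧ obj nn = M ∧
    ∀ i, i < nn → ∃ (Q : A) (p : obj (i + 1) ⟶ Q), Q ∈ Y ∧ SES A (map i) p}

/-- The minimal torsion class containing a class `X` of objects. -/
def TT (X : Set A) : Set A := ⋂₀ {T : Set A | IsTorsionClass A T ∧ X ⊆ T}

/-- `A` is a length category: every object has a well-founded subobject lattice
in both directions. -/
def IsLengthCategory : Prop :=
  ∀ X : A, WellFoundedLT (Subobject X) ∧ WellFoundedGT (Subobject X)

/-- The set of torsion subobjects (with respect to the torsion class `T`)
of objects of `MM`; this is the class `tMM = {tM : M ∈ MM}`. -/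
def torsObjs (T MM : Set A) : Set A :=
  {Y | ∃ (X : A) (_ : X ∈ MM) (i : Y ⟶ X) (F : A) (p : X ⟶ F),
    Y ∈ T ∧ F ∈ rperp A T ∧ SES A i p}

/-- The set of torsion-free quotients (with respect to the torsion class `T`)
of objects of `MM`; this is the class `fMM = {coker (tM ↪ M) : M ∈ MM}`. -/
def freeQuots (T MM : Set A) : Set A :=
  {F | ∃ (X : A) (_ : X ∈ MM) (Y : A) (i : Y ⟶ X) (p : X ⟶ F),
    Y ∈ T ∧ F ∈ rperp A T ∧ SES A i p}

/-- Contravariantly finite subcategory: every object has a right approximation. -/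
def ContravariantlyFinite (X : Set A) : Prop :=
  ∀ C : A, ∃ (M : A) (_ : M ∈ X) (π : M ⟶ C),
    ∀ M' : A, M' ∈ X → ∀ π' : M' ⟶ C, ∃ f : M' ⟶ M, f ≫ π = π'

/-- Covariantly finite subcategory: every object has a left approximation. -/
def CovariantlyFinite (X : Set A) : Prop :=
  ∀ C : A, ∃ (M : A) (_ : M ∈ X) (ι : C ⟶ M),
    ∀ M' : A, M' ∈ X → ∀ ι' : C ⟶ M', ∃ f : M ⟶ M', ι ≫ f = ι'

/-- Functorially finite subcategory. -/
def FunctoriallyFinite (X : Set A) : Prop :=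
  ContravariantlyFinite A X ∧ CovariantlyFinite A X

/-- The union `⋃_{r > s} δ r`. -/
def unionGT (δ : unitInterval → Set A) (s : unitInterval) : Set A :=
  ⋃ (r : unitInterval) (_ : s < r), δ r

/-- The union `⋃_{r > s} δ r`, with the convention that it contains the zero
objects (so that at `s = 1` it is `{0}`). -/
def unionGTc (δ : unitInterval → Set A) (s : unitInterval) : Set A :=
  {Z : A | IsZero Z} ∪ unionGT A δ s

/-- The intersection `⋂_{r < s} δ r`. -/
def interLT (δ : unitInterval → Set A) (s : unitInterval) : Set A :=
  ⋂ (r : unitInterval) (_ : r < s), δ r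

/-- The intersection `⋂_{r < s} δ r` with the convention that at `s = 0` it is `MM`. -/
def interLTc (MM : Set A) (δ : unitInterval → Set A) (s : unitInterval) : Set A :=
  MM ∩ interLT A δ s

/-- A chain of torsion classes indexed by `[0,1]`: `T_0 = A`, `T_1 = {0}`,
order-reversing. -/
def IsChainOfTorsionClasses (η : unitInterval → Set A) : Prop :=
  (∀ s, IsTorsionClass A (η s)) ∧ η 0 = Set.univ ∧ η 1 = {Z : A | IsZero Z} ∧
  ∀ r s : unitInterval, r ≤ s → η s ⊆ η r

/-- The slice `P_t` of a chain of torsion classes `η`: torsion-free quotients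
(with respect to the torsion class `⋃_{s>t} η s`) of the objects of
`S_t = (⋂_{s<t} η s) \ (⋃_{s>t} η s)`. -/
def sliceP (η : unitInterval → Set A) (t : unitInterval) : Set A :=
  {Q | ∃ (M tM : A) (ι : tM ⟶ M) (p : M ⟶ Q),
    M ∈ interLT A η t ∧ M ∉ unionGTc A η t ∧
    tM ∈ unionGTc A η t ∧ Q ∈ rperp A (unionGTc A η t) ∧ SES A ι p}

/-- `(r, obj, map, t)` is a Harder-Narasimhan filtration of `X` with respect to the
chain of torsion classes `η`: a filtration `0 = obj 0 ⊆ obj 1 ⊆ ... ⊆ obj r = X` whose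
successive quotients lie in the slices `P_{t i}` with `t` strictly decreasing. -/
def IsHNFiltration (η : unitInterval → Set A) (X : A)
    (r : ℕ) (obj : ℕ → A) (map : ∀ i, obj i ⟶ obj (i + 1)) (t : ℕ → unitInterval) : Prop :=
  IsZero (obj 0) ∧ obj r = X ∧
  (∀ i j, i < j → j < r → t j < t i) ∧
  ∀ i, i < r → ∃ (Q : A) (p : obj (i + 1) ⟶ Q), Q ∈ sliceP A η (t i) ∧ SES A (map i) p

section

variable {A}

section ShortExact

variable {X Y Z : A} {f : X ⟶ Y} {g : Y ⟶ Z}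

lemma SES.mono (h : SES A f g) : Mono f := h.choose_spec.mono_f

lemma SES.epi (h : SES A f g) : Epi g := h.choose_spec.epi_g

lemma SES.isIso_f_iff (h : SES A f g) : IsIso f ↔ IsZero Z := h.choose_spec.isIso_f_iff

lemma SES.isIso_g_iff (h : SES A f g) : IsIso g ↔ IsZero X := h.choose_spec.isIso_g_iff

lemma SES.exists_lift (h : SES A f g) {W : A} (u : W ⟶ Y) (hu : u ≫ g = 0) :
    ∃ v : W ⟶ X, v ≫ f = u :=
  ⟨_, (KernelFork.IsLimit.lift' h.choose_spec.fIsKernel u hu).2⟩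

lemma SES.eqToHom_comp {X' Y' : A} (hX : X' = X) (hY : Y = Y') (h : SES A f g) :
    SES A (eqToHom hX ≫ f ≫ eqToHom hY) (eqToHom hY.symm ≫ g) := by
  subst hX hY
  simpa using h

lemma ses_kernel_ι (g : Y ⟶ Z) [Epi g] : SES A (kernel.ι g) g :=
  ⟨kernel.condition g,
    .mk' (ShortComplex.exact_of_f_is_kernel _ (kernelIsKernel g)) inferInstance inferInstance⟩

lemma ses_cokernel_π (f : X ⟶ Y) [Mono f] : SES A f (cokernel.π f) :=
  ⟨cokernel.condition f,
    .mk' (ShortComplex.exact_of_g_is_cokernel _ (cokernelIsCokernel f)) inferInstance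
      inferInstance⟩

end ShortExact

section TorsionClass

variable {T : Set A}

omit [Abelian A] in
lemma ClosedUnderQuotients.mem_of_iso (hT : ClosedUnderQuotients A T) {X Y : A} (e : X ≅ Y)
    (hX : X ∈ T) : Y ∈ T :=
  hT e.hom inferInstance hX

lemma isZero_of_mem_of_mem_rperp {Q : A} (hQ : Q ∈ T) (hQ' : Q ∈ rperp A T) : IsZero Q :=
  (IsZero.iff_id_eq_zero Q).2 (hQ' Q hQ (𝟙 Q))

lemma pullback_mem_of_ses (hQ : ClosedUnderQuotients A T) (hE : ClosedUnderExtensions A T)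
    {K Y C X : A} {i : K ⟶ Y} {π : Y ⟶ C} (h : SES A i π) (hK : K ∈ T) (hX : X ∈ T)
    (f : X ⟶ C) : pullback π f ∈ T := by
  have := h.epi
  have eK : K ≅ kernel π := IsLimit.conePointUniqueUpToIso h.choose_spec.fIsKernel (limit.isLimit _)
  have := isIso_kernel_map_of_isPullback (IsPullback.of_hasPullback π f).flip
  have hker : kernel (pullback.snd π f) ∈ T := hQ.mem_of_iso
    (eK ≪≫ (asIso (kernel.map _ _ (pullback.fst π f) f pullback.condition.symm)).symm) hK
  exact hE _ _ (ses_kernel_ι _) hker hX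

/-- `f` lifts to the pullback along `Y ⟶ cokernel m.arrow`, an extension of `X` by `m` whose
image in `Y` contains `m`, hence equals it by maximality. -/
lemma cokernel_mem_rperp_of_maximal (hQ : ClosedUnderQuotients A T)
    (hE : ClosedUnderExtensions A T) {Y : A} {m : Subobject Y}
    (hm : Maximal (fun N : Subobject Y => (N : A) ∈ T) m) : cokernel m.arrow ∈ rperp A T := by
  intro X hX f
  set g := pullback.fst (cokernel.π m.arrow) f
  have hP := pullback_mem_of_ses hQ hE (ses_cokernel_π m.arrow) hm.prop hX f
  have himage : (imageSubobject g : A) ∈ T :=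
    hQ.mem_of_iso (imageSubobjectIso g).symm (hQ (factorThruImage g) inferInstance hP)
  have hle : imageSubobject g ≤ m := hm.2 himage <| Subobject.le_of_comm
    (pullback.lift (f := cokernel.π m.arrow) (g := f) m.arrow 0 (by simp) ≫
      factorThruImageSubobject g)
    (by rw [Category.assoc, imageSubobject_arrow_comp]; exact pullback.lift_fst _ _ _)
  have hg : g ≫ cokernel.π m.arrow = 0 := by
    have : g = (factorThruImageSubobject g ≫ (imageSubobject g).ofLE m hle) ≫ m.arrow := by simp
    rw [this, Category.assoc, cokernel.condition, comp_zero]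
  exact zero_of_epi_comp (pullback.snd (cokernel.π m.arrow) f) (by rw [← pullback.condition, hg])

lemma exists_ses_mem_rperp (hQ : ClosedUnderQuotients A T) (hE : ClosedUnderExtensions A T)
    (h0 : ∀ Z : A, IsZero Z → Z ∈ T) (Y : A) [WellFoundedGT (Subobject Y)] :
    ∃ (K F : A) (i : K ⟶ Y) (p : Y ⟶ F), K ∈ T ∧ F ∈ rperp A T ∧ SES A i p := by
  obtain ⟨m, hm⟩ := WellFoundedGT.exists_maximal ‹_› {N : Subobject Y | (N : A) ∈ T}
    ⟨⊥, h0 _ ((isZero_zero A).of_iso Subobject.botCoeIsoZero)⟩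
  exact ⟨m, _, m.arrow, _, hm.prop, cokernel_mem_rperp_of_maximal hQ hE hm,
    ses_cokernel_π m.arrow⟩

lemma nonempty_iso_of_ses_of_mem_rperp {K₁ K₂ X₁ X₂ F₁ F₂ : A} {i₁ : K₁ ⟶ X₁}
    {p₁ : X₁ ⟶ F₁} {i₂ : K₂ ⟶ X₂} {p₂ : X₂ ⟶ F₂} (h₁ : SES A i₁ p₁) (h₂ : SES A i₂ p₂)
    (hK₁ : K₁ ∈ T) (hK₂ : K₂ ∈ T) (hF₁ : F₁ ∈ rperp A T) (hF₂ : F₂ ∈ rperp A T)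
    (e : X₁ ≅ X₂) : Nonempty (K₁ ≅ K₂) := by
  obtain ⟨u, hu⟩ := h₂.exists_lift (i₁ ≫ e.hom) (hF₂ K₁ hK₁ _)
  obtain ⟨v, hv⟩ := h₁.exists_lift (i₂ ≫ e.inv) (hF₁ K₂ hK₂ _)
  have := h₁.mono
  have := h₂.mono
  exact ⟨⟨u, v, by simp [← cancel_mono i₁, hv, reassoc_of% hu],
    by simp [← cancel_mono i₂, hu, reassoc_of% hv]⟩⟩

end TorsionClass

section Chain

variable {η : unitInterval → Set A}

lemma IsChainOfTorsionClasses.mem_of_isZero (hη : IsChainOfTorsionClasses A η) {Z : A}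
    (hZ : IsZero Z) (s : unitInterval) : Z ∈ η s :=
  hη.2.2.2 s 1 unitInterval.le_one' (by rw [hη.2.2.1]; exact hZ)

omit [Abelian A] in
lemma mem_unionGTc_iff {s : unitInterval} {Z : A} :
    Z ∈ unionGTc A η s ↔ IsZero Z ∨ ∃ r, s < r ∧ Z ∈ η r := by
  simp [unionGTc, unionGT]

lemma IsChainOfTorsionClasses.closedUnderQuotients_unionGTc (hη : IsChainOfTorsionClasses A η)
    (s : unitInterval) : ClosedUnderQuotients A (unionGTc A η s) := by
  intro X Y p hp hX
  rw [mem_unionGTc_iff] at hX ⊢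
  rcases hX with hX | ⟨r, hr, hX⟩
  · exact Or.inl (hX.of_epi p)
  · exact Or.inr ⟨r, hr, (hη.1 r).1 p hp hX⟩

lemma IsChainOfTorsionClasses.closedUnderExtensions_unionGTc (hη : IsChainOfTorsionClasses A η)
    (s : unitInterval) : ClosedUnderExtensions A (unionGTc A η s) := by
  have hQ := hη.closedUnderQuotients_unionGTc s
  intro X Y Z f g h hX hZ
  rcases mem_unionGTc_iff.1 hX with hX₀ | ⟨r₁, hr₁, hX₁⟩
  · have := h.isIso_g_iff.2 hX₀
    exact hQ.mem_of_iso (asIso g).symm hZ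
  rcases mem_unionGTc_iff.1 hZ with hZ₀ | ⟨r₂, hr₂, hZ₂⟩
  · have := h.isIso_f_iff.2 hZ₀
    exact hQ.mem_of_iso (asIso f) hX
  exact mem_unionGTc_iff.2 <| Or.inr ⟨min r₁ r₂, lt_min hr₁ hr₂,
    (hη.1 _).2 f g h (hη.2.2.2 _ _ (min_le_left _ _) hX₁) (hη.2.2.2 _ _ (min_le_right _ _) hZ₂)⟩

variable (η) in
noncomputable def phase (M : A) : unitInterval := sSup {s | M ∈ η s}

omit [Category.{v} A] [Abelian A] in
lemma le_phase {M : A} {s : unitInterval} (h : M ∈ η s) : s ≤ phase η M := le_sSup h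

lemma mem_of_lt_phase (hη : IsChainOfTorsionClasses A η) {M : A} {s : unitInterval}
    (h : s < phase η M) : M ∈ η s := by
  obtain ⟨r, hr, hsr⟩ := lt_sSup_iff.1 h
  exact hη.2.2.2 s r hsr.le hr

lemma phase_congr (hη : IsChainOfTorsionClasses A η) {M N : A} (e : M ≅ N) :
    phase η M = phase η N :=
  congrArg sSup <| Set.ext fun s => ⟨(hη.1 s).1.mem_of_iso e, (hη.1 s).1.mem_of_iso e.symm⟩

omit [Abelian A] in
lemma lt_phase_of_mem_unionGTc {K : A} {s : unitInterval} (hK : K ∈ unionGTc A η s)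
    (hK₀ : ¬ IsZero K) : s < phase η K := by
  obtain hK | ⟨r, hsr, hr⟩ := mem_unionGTc_iff.1 hK
  · exact absurd hK hK₀
  · exact hsr.trans_le (le_phase hr)

lemma mem_sliceP_phase (hη : IsChainOfTorsionClasses A η) {K Y F : A} {i : K ⟶ Y}
    {p : Y ⟶ F} (hY : ¬ IsZero Y) (h : SES A i p) (hK : K ∈ unionGTc A η (phase η Y))
    (hF : F ∈ rperp A (unionGTc A η (phase η Y))) : F ∈ sliceP A η (phase η Y) := by
  refine ⟨Y, K, i, p, ?_, fun hY' => ?_, hK, hF, h⟩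
  · simp only [interLT, Set.mem_iInter]
    exact fun r hr => mem_of_lt_phase hη hr
  · exact lt_irrefl _ (lt_phase_of_mem_unionGTc hY' hY)

lemma not_isZero_of_mem_sliceP (hη : IsChainOfTorsionClasses A η) {t : unitInterval} {Q : A}
    (hQ : Q ∈ sliceP A η t) : ¬ IsZero Q := by
  obtain ⟨M, tM, ι, p, -, hM, htM, -, h⟩ := hQ
  intro hQ₀
  have := h.isIso_f_iff.2 hQ₀
  exact hM ((hη.closedUnderQuotients_unionGTc t).mem_of_iso (asIso ι) htM)

lemma mem_of_mem_sliceP (hη : IsChainOfTorsionClasses A η) {t s : unitInterval} {Q : A}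
    (hQ : Q ∈ sliceP A η t) (hs : s < t) : Q ∈ η s := by
  obtain ⟨M, tM, ι, p, hM, -, -, -, h⟩ := hQ
  simp only [interLT, Set.mem_iInter] at hM
  exact (hη.1 s).1 p h.epi (hM s hs)

lemma mem_unionGTc_of_mem_sliceP (hη : IsChainOfTorsionClasses A η) {t s : unitInterval}
    {Q : A} (hQ : Q ∈ sliceP A η t) (hs : s < t) : Q ∈ unionGTc A η s := by
  obtain ⟨r, hsr, hrt⟩ := exists_between hs
  exact mem_unionGTc_iff.2 (Or.inr ⟨r, hsr, mem_of_mem_sliceP hη hQ hrt⟩)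

lemma mem_rperp_of_mem_sliceP {t : unitInterval} {Q : A} (hQ : Q ∈ sliceP A η t) :
    Q ∈ rperp A (unionGTc A η t) := by
  obtain ⟨-, -, -, -, -, -, -, hQ, -⟩ := hQ
  exact hQ

end Chain

section HNFiltration

variable {η : unitInterval → Set A} {X : A} {r : ℕ} {obj : ℕ → A}
  {map : ∀ i, obj i ⟶ obj (i + 1)} {t : ℕ → unitInterval}

lemma IsHNFiltration.of_isZero (hX : IsZero X) :
    IsHNFiltration A η X 0 (fun _ => X) (fun _ => 𝟙 X) (fun _ => 0) :=
  ⟨hX, rfl, by omega, by omega⟩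

lemma IsHNFiltration.truncate (h : IsHNFiltration A η X (r + 1) obj map t) :
    IsHNFiltration A η (obj r) r obj map t :=
  ⟨h.1, rfl, fun i j hij hj => h.2.2.1 i j hij (by omega), fun i hi => h.2.2.2 i (by omega)⟩

lemma IsHNFiltration.param_anti (h : IsHNFiltration A η X r obj map t) {i j : ℕ} (hij : i ≤ j)
    (hj : j < r) : t j ≤ t i := by
  obtain rfl | hij := hij.eq_or_lt
  · exact le_rfl
  · exact (h.2.2.1 i j hij hj).le

lemma IsHNFiltration.obj_mem {T : Set A} (hE : ClosedUnderExtensions A T)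
    (h0 : ∀ Z : A, IsZero Z → Z ∈ T) (h : IsHNFiltration A η X r obj map t) {m : ℕ}
    (hm : m ≤ r) (hT : ∀ i < m, sliceP A η (t i) ⊆ T) : obj m ∈ T := by
  induction m with
  | zero => exact h0 _ h.1
  | succ m ih =>
    obtain ⟨Q, p, hQ, hses⟩ := h.2.2.2 m hm
    exact hE _ _ hses (ih (by omega) fun i hi => hT i (by omega)) (hT m (by omega) hQ)

lemma IsHNFiltration.eq_zero_of_isZero (hη : IsChainOfTorsionClasses A η)
    (h : IsHNFiltration A η X r obj map t) (hX : IsZero X) : r = 0 := by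
  obtain _ | r := r
  · rfl
  obtain ⟨Q, p, hQ, hses⟩ := h.2.2.2 r (by omega)
  have := hses.epi
  exact absurd ((h.2.1 ▸ hX).of_epi p) (not_isZero_of_mem_sliceP hη hQ)

lemma IsHNFiltration.param_last_eq_phase (hη : IsChainOfTorsionClasses A η)
    (h : IsHNFiltration A η X (r + 1) obj map t) : t r = phase η X := by
  obtain ⟨Q, p, hQ, hses⟩ := h.2.2.2 r (by omega)
  apply le_antisymm
  · refine le_of_forall_lt_imp_le_of_dense fun s hs => le_phase ?_
    rw [← h.2.1]
    exact h.obj_mem (hη.1 s).2 (fun Z hZ => hη.mem_of_isZero hZ s) le_rfl fun i hi Q hQ =>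
      mem_of_mem_sliceP hη hQ (hs.trans_le (h.param_anti (by omega) (by omega)))
  · refine sSup_le fun s hs => le_of_not_gt fun hrs => not_isZero_of_mem_sliceP hη hQ ?_
    refine isZero_of_mem_of_mem_rperp ?_ (mem_rperp_of_mem_sliceP hQ)
    exact mem_unionGTc_iff.2 (Or.inr ⟨s, hrs, (hη.1 s).1 p hses.epi (h.2.1 ▸ hs)⟩)

lemma IsHNFiltration.phase_le_param (hη : IsChainOfTorsionClasses A η)
    (h : IsHNFiltration A η X r obj map t) {i : ℕ} (hi : i < r) : phase η X ≤ t i := by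
  obtain ⟨r, rfl⟩ : ∃ r', r = r' + 1 := ⟨r - 1, by omega⟩
  rw [← h.param_last_eq_phase hη]
  exact h.param_anti (by omega) (by omega)

lemma IsHNFiltration.exists_ses_last (hη : IsChainOfTorsionClasses A η)
    (h : IsHNFiltration A η X (r + 1) obj map t) :
    ∃ (Q : A) (p : obj (r + 1) ⟶ Q), obj r ∈ unionGTc A η (t r) ∧
      Q ∈ rperp A (unionGTc A η (t r)) ∧ SES A (map r) p := by
  obtain ⟨Q, p, hQ, hses⟩ := h.2.2.2 r (by omega)
  refine ⟨Q, p, ?_, mem_rperp_of_mem_sliceP hQ, hses⟩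
  exact h.obj_mem (hη.closedUnderExtensions_unionGTc _) (fun Z hZ => Or.inl hZ) (by omega)
    fun i hi Q hQ => mem_unionGTc_of_mem_sliceP hη hQ (h.2.2.1 i r hi (by omega))

lemma IsHNFiltration.snoc {W Y Q : A} {ι : W ⟶ Y} {p : Y ⟶ Q} {s : unitInterval}
    (h : IsHNFiltration A η W r obj map t) (hses : SES A ι p) (hQ : Q ∈ sliceP A η s)
    (hs : ∀ i < r, s < t i) :
    ∃ (obj' : ℕ → A) (map' : ∀ i, obj' i ⟶ obj' (i + 1)) (t' : ℕ → unitInterval),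
      IsHNFiltration A η Y (r + 1) obj' map' t' := by
  obtain ⟨hzero, rfl, hanti, hsteps⟩ := h
  set obj' : ℕ → A := fun i => if i ≤ r then obj i else Y
  have hlow : ∀ {i}, i ≤ r → obj' i = obj i := fun hi => if_pos hi
  have htop : obj' (r + 1) = Y := if_neg (by omega)
  set map' : ∀ i, obj' i ⟶ obj' (i + 1) := fun i =>
    if hi : i < r then eqToHom (hlow hi.le) ≫ map i ≫ eqToHom (hlow hi).symm
    else if hir : i = r then
      eqToHom (by subst hir; exact hlow le_rfl) ≫ ι ≫ eqToHom (by subst hir; exact htop.symm)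
    else 0
  refine ⟨obj', map', fun i => if i < r then t i else s, ?_, htop, ?_, ?_⟩
  · rw [hlow r.zero_le]
    exact hzero
  · intro i j hij hj
    dsimp only
    split_ifs <;> first | omega | exact hanti i j hij ‹_› | exact hs i ‹_›
  · intro i hi
    obtain hi | hi := Nat.lt_succ_iff_lt_or_eq.1 hi
    · obtain ⟨Q', p', hQ', hses'⟩ := hsteps i hi
      refine ⟨Q', eqToHom (hlow hi) ≫ p', by simpa [hi] using hQ', ?_⟩
      rw [show map' i = _ from dif_pos hi]
      exact hses'.eqToHom_comp _ _
    · subst i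
      refine ⟨Q, eqToHom htop ≫ p, by simpa using hQ, ?_⟩
      rw [show map' r = _ from (dif_neg (lt_irrefl r)).trans (dif_pos rfl)]
      exact hses.eqToHom_comp _ _

end HNFiltration

variable {η : unitInterval → Set A}

theorem exists_isHNFiltration (hη : IsChainOfTorsionClasses A η) (hlen : IsLengthCategory A)
    (X : A) : ∃ (r : ℕ) (obj : ℕ → A) (map : ∀ i, obj i ⟶ obj (i + 1)) (t : ℕ → unitInterval),
      IsHNFiltration A η X r obj map t := by
  have := (hlen X).1
  suffices ∀ (N : Subobject X) (Y : A), (Y ≅ (N : A)) →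
      ∃ (r : ℕ) (obj : ℕ → A) (map : ∀ i, obj i ⟶ obj (i + 1)) (t : ℕ → unitInterval),
        IsHNFiltration A η Y r obj map t from
    this _ X (Subobject.underlyingIso (𝟙 X)).symm
  intro N
  induction N using WellFoundedLT.induction with
  | _ N ih =>
  intro Y e
  by_cases hY : IsZero Y
  · exact ⟨0, _, _, _, .of_isZero hY⟩
  have := (hlen Y).2
  obtain ⟨K, F, i, p, hK, hF, hses⟩ := exists_ses_mem_rperp
    (hη.closedUnderQuotients_unionGTc (phase η Y)) (hη.closedUnderExtensions_unionGTc _)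
    (fun Z hZ => Or.inl hZ) Y
  have hFP := mem_sliceP_phase hη hY hses hK hF
  have := hses.mono
  have hlt : Subobject.mk (i ≫ e.hom ≫ N.arrow) < N := by
    conv_rhs => rw [← Subobject.mk_arrow N]
    refine Subobject.mk_lt_mk_of_comm (i ≫ e.hom) (by simp) fun hi => ?_
    have : IsIso i := IsIso.of_isIso_comp_right i e.hom
    exact not_isZero_of_mem_sliceP hη hFP (hses.isIso_f_iff.1 this)
  obtain ⟨r, obj, map, t, hK'⟩ := ih _ hlt K (Subobject.underlyingIso _).symm
  refine ⟨r + 1, hK'.snoc hses hFP fun j hj => ?_⟩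
  have hK₀ : ¬ IsZero K := fun hK₀ => by
    have := hK'.eq_zero_of_isZero hη hK₀
    omega
  exact (lt_phase_of_mem_unionGTc hK hK₀).trans_le (hK'.phase_le_param hη hj)

theorem IsHNFiltration.unique (hη : IsChainOfTorsionClasses A η) {r₁ : ℕ} :
    ∀ {X₁ X₂ : A} {r₂ : ℕ} {obj₁ obj₂ : ℕ → A} {map₁ : ∀ i, obj₁ i ⟶ obj₁ (i + 1)}
      {map₂ : ∀ i, obj₂ i ⟶ obj₂ (i + 1)} {t₁ t₂ : ℕ → unitInterval},
      IsHNFiltration A η X₁ r₁ obj₁ map₁ t₁ → IsHNFiltration A η X₂ r₂ obj₂ map₂ t₂ →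
      (X₁ ≅ X₂) →
      r₁ = r₂ ∧ (∀ i < r₁, t₁ i = t₂ i) ∧ ∀ i ≤ r₁, Nonempty (obj₁ i ≅ obj₂ i) := by
  induction r₁ with
  | zero =>
    intro X₁ X₂ r₂ obj₁ obj₂ map₁ map₂ t₁ t₂ h₁ h₂ e
    have hX₂ : IsZero X₂ := (h₁.2.1 ▸ h₁.1).of_iso e.symm
    obtain rfl := h₂.eq_zero_of_isZero hη hX₂
    refine ⟨rfl, by omega, fun i hi => ?_⟩
    obtain rfl : i = 0 := by omega
    exact ⟨h₁.1.iso h₂.1⟩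
  | succ r ih =>
    intro X₁ X₂ r₂ obj₁ obj₂ map₁ map₂ t₁ t₂ h₁ h₂ e
    obtain _ | r₂ := r₂
    · have hX₁ : IsZero X₁ := (h₂.2.1 ▸ h₂.1).of_iso e
      exact absurd (h₁.eq_zero_of_isZero hη hX₁) r.succ_ne_zero
    have e' : obj₁ (r + 1) ≅ obj₂ (r₂ + 1) := eqToIso h₁.2.1 ≪≫ e ≪≫ eqToIso h₂.2.1.symm
    have ht : t₁ r = t₂ r₂ := by
      rw [h₁.param_last_eq_phase hη, h₂.param_last_eq_phase hη, phase_congr hη e]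
    obtain ⟨Q₁, p₁, hK₁, hF₁, hses₁⟩ := h₁.exists_ses_last hη
    obtain ⟨Q₂, p₂, hK₂, hF₂, hses₂⟩ := h₂.exists_ses_last hη
    rw [ht] at hK₁ hF₁
    obtain ⟨φ⟩ := nonempty_iso_of_ses_of_mem_rperp hses₁ hses₂ hK₁ hK₂ hF₁ hF₂ e'
    obtain ⟨rfl, ht', hobj⟩ := ih h₁.truncate h₂.truncate φ
    refine ⟨rfl, fun i hi => ?_, fun i hi => ?_⟩
    · obtain hi | rfl := Nat.lt_succ_iff_lt_or_eq.1 hi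
      exacts [ht' i hi, ht]
    · obtain hi | rfl := Nat.le_succ_iff.1 hi
      exacts [hobj i hi, ⟨e'⟩]

end

theorem hn_filtration_exists_unique
    (hlen : IsLengthCategory A)
    (η : unitInterval → Set A) (hη : IsChainOfTorsionClasses A η)
    (X : A) :
    (∃ (r : ℕ) (obj : ℕ → A) (map : ∀ i, obj i ⟶ obj (i + 1)) (t : ℕ → unitInterval),
      IsHNFiltration A η X r obj map t) ∧
    (∀ (r₁ r₂ : ℕ) (obj₁ obj₂ : ℕ → A)
      (map₁ : ∀ i, obj₁ i ⟶ obj₁ (i + 1)) (map₂ : ∀ i, obj₂ i ⟶ obj₂ (i + 1))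
      (t₁ t₂ : ℕ → unitInterval),
      IsHNFiltration A η X r₁ obj₁ map₁ t₁ → IsHNFiltration A η X r₂ obj₂ map₂ t₂ →
      r₁ = r₂ ∧ (∀ i, i < r₁ → t₁ i = t₂ i) ∧
        ∀ i, i ≤ r₁ → Nonempty (obj₁ i ≅ obj₂ i)) :=
  ⟨exists_isHNFiltration hη hlen X,
    fun _ _ _ _ _ _ _ _ h₁ h₂ => h₁.unique hη h₂ (Iso.refl X)⟩

end TorsionPaper
end

section
/- Let M be an n-cluster-tilting subcategory of an abelian category A and U an n-torsion class in M. Then for every object X of M, the n-torsion subobject U^X of X with respect to U is isomorphic to the torsion subobject tX of X with respect to the minimal torsion class T(U) of A containing U. -/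
open CategoryTheory CategoryTheory.Limits

universe w v u u' v' uG

set_option linter.dupNamespace false

namespace TorsionPaper

variable (A : Type u) [Category.{v} A] [Abelian A]
/-- A sequence of objects and morphisms `obj 0 → obj 1 → obj 2 → ⋯` in `A`. -/
structure Seq where
  obj : ℕ → A
  map : ∀ i, obj i ⟶ obj (i + 1)

variable {A}

/-- Exactness of the induced complex
`0 → Hom(U', V^1) → Hom(U', V^2) → ⋯ → Hom(U', V^n) → 0`, where
`V^i = S.obj (i + 2)` for `1 ≤ i ≤ n`. -/
def HomSeqExact (U' : A) (S : Seq A) (n : ℕ) : Prop :=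
  ∀ i, 1 ≤ i → i ≤ n →
    ∀ f : U' ⟶ S.obj (i + 2),
      (i < n → f ≫ S.map (i + 2) = 0) →
      (if i = 1 then f = 0 else ∃ g : U' ⟶ S.obj (i + 1), g ≫ S.map (i + 1) = f)

variable (A)

/-- `S` encodes the fundamental `n`-exact sequence
`0 → U^X → X → V^1 → ⋯ → V^n → 0` of `X` with respect to `U`:
here `S.obj 0` and `S.obj (n+3)` are zero, `S.obj 1 = U^X ∈ U`, `S.obj 2 = X`,
`S.obj (i+2) = V^i ∈ MM`, the sequence is exact (as a sequence in the ambient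
abelian category, all of whose terms lie in the `n`-cluster-tilting subcategory `MM`),
and `0 → Hom(U', V^1) → ⋯ → Hom(U', V^n) → 0` is exact for every `U' ∈ U`. -/
def IsNTorsionSequenceFor (n : ℕ) (MM U : Set A) (X : A) (S : Seq A) : Prop :=
  IsZero (S.obj 0) ∧ IsZero (S.obj (n + 3)) ∧
  S.obj 1 ∈ U ∧ S.obj 2 = X ∧
  (∀ i, 3 ≤ i → i ≤ n + 2 → S.obj i ∈ MM) ∧
  (∀ i, i ≤ n + 1 → IsExactAt A (S.map i) (S.map (i + 1))) ∧
  (∀ U' ∈ U, HomSeqExact U' S n)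

/-- `U` is an `n`-torsion class in the `n`-cluster-tilting subcategory `MM`
(Jørgensen's definition): every `X ∈ MM` admits a fundamental `n`-exact sequence. -/
def IsNTorsionClass (n : ℕ) (MM U : Set A) : Prop :=
  U ⊆ MM ∧ ∀ X ∈ MM, ∃ S : Seq A, IsNTorsionSequenceFor A n MM U X S

/-- `ι : UX ⟶ X` exhibits `UX` as the `n`-torsion subobject of `X` with respect to
the `n`-torsion class `U`. -/
def IsNTorsionSubobject (n : ℕ) (MM U : Set A) (X UX : A) (ι : UX ⟶ X) : Prop :=
  ∃ (S : Seq A) (h1 : S.obj 1 = UX) (h2 : S.obj 2 = X),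
    IsNTorsionSequenceFor A n MM U X S ∧
    eqToHom h1.symm ≫ S.map 1 ≫ eqToHom h2 = ι

/-- `MM` is generating: every object is a quotient of an object of `MM`. -/
def Generating (MM : Set A) : Prop := Fac A MM = Set.univ

/-- `MM` is cogenerating: every object is a subobject of an object of `MM`. -/
def Cogenerating (MM : Set A) : Prop := SubOf A MM = Set.univ

/-- `MM` is an `n`-cluster-tilting subcategory of the abelian category `A`:
functorially finite, generating-cogenerating, and given by the vanishing of
`Ext^i` for `1 ≤ i ≤ n - 1` on either side. -/
def IsNClusterTilting [HasExt.{w} A] (n : ℕ) (MM : Set A) : Prop :=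
  FunctoriallyFinite A MM ∧ Generating A MM ∧ Cogenerating A MM ∧
  (∀ X : A, X ∈ MM ↔ ∀ Y ∈ MM, ∀ i, 1 ≤ i → i ≤ n - 1 → Subsingleton (Abelian.Ext X Y i)) ∧
  (∀ Y : A, Y ∈ MM ↔ ∀ X ∈ MM, ∀ i, 1 ≤ i → i ≤ n - 1 → Subsingleton (Abelian.Ext X Y i))

/-- A chain of `n`-torsion classes in `MM` indexed by `[0,1]`:
`U_0 = MM`, `U_1 = {0}`, order-reversing. -/
def IsChainOfNTorsionClasses (n : ℕ) (MM : Set A) (δ : unitInterval → Set A) : Prop :=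
  (∀ s, IsNTorsionClass A n MM (δ s)) ∧ δ 0 = MM ∧ δ 1 = {Z : A | IsZero Z} ∧
  ∀ r s : unitInterval, r ≤ s → δ s ⊆ δ r

/-- `(r, obj, map, t)` is an `n`-Harder-Narasimhan filtration of `X` with respect to
the chain of `n`-torsion classes `δ`: a strict filtration
`0 = obj 0 ⊊ obj 1 ⊊ ⋯ ⊊ obj r = X` with strictly decreasing parameters `t i` such
that `obj (i+1)` lies in `(⋂_{s < t i} U_s) \ (⋃_{s > t i} U_s)` and `obj i` is the
`n`-torsion subobject of `obj (i+1)` with respect to `⋃_{s > t i} U_s`; in particular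
the `n`-cokernel of `obj i → obj (i+1)` lies in the slice `Q_{t i}`. -/
def IsNHNFiltration (n : ℕ) (MM : Set A) (δ : unitInterval → Set A) (X : A)
    (r : ℕ) (obj : ℕ → A) (map : ∀ i, obj i ⟶ obj (i + 1)) (t : ℕ → unitInterval) : Prop :=
  IsZero (obj 0) ∧ obj r = X ∧
  (∀ i j, i < j → j < r → t j < t i) ∧
  ∀ i, i < r →
    obj (i + 1) ∈ interLTc A MM δ (t i) ∧ obj (i + 1) ∉ unionGTc A δ (t i) ∧
    ¬ IsIso (map i) ∧
    IsNTorsionSubobject A n MM (unionGTc A δ (t i)) (obj (i + 1)) (obj i) (map i)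

/-! The cokernel of `U^X → X` embeds into `V¹`, so exactness of `0 → Hom(U, V¹) → Hom(U, V²)`
makes it Hom-orthogonal to `U`. The left perpendicular of an object is a torsion class, hence
the cokernel is Hom-orthogonal to all of `T(U)`, while `U^X ∈ U ⊆ T(U)`. So
`0 → U^X → X → coker → 0` is a torsion sequence for `T(U)`, and torsion subobjects are unique
up to isomorphism over `X`. -/

def lperp (F : Set A) : Set A := {X | ∀ Y ∈ F, ∀ f : X ⟶ Y, f = 0}

section

variable {A}

theorem isTorsionClass_lperp (F : Set A) : IsTorsionClass A (lperp A F) := by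
  constructor
  · intro X Y q _ hX Z hZ g
    rw [← cancel_epi q, comp_zero]
    exact hX Z hZ _
  · rintro X Y Z f g ⟨_, hfg⟩ hX hZ W hW h
    have : Epi g := hfg.epi_g
    have hfh : f ≫ h = 0 := hX W hW _
    rw [← hfg.exact.g_desc h hfh, hZ W hW (hfg.exact.desc h hfh), comp_zero]

theorem subset_TT (U : Set A) : U ⊆ TT A U :=
  fun _ hX => Set.mem_sInter.2 fun _ hT => hT.2 hX

theorem TT_subset {U T : Set A} (hT : IsTorsionClass A T) (hU : U ⊆ T) : TT A U ⊆ T :=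
  Set.sInter_subset_of_mem ⟨hT, hU⟩

theorem rperp_antitone {U V : Set A} (h : U ⊆ V) : rperp A V ⊆ rperp A U :=
  fun _ hY X hX => hY X (h hX)

theorem rperp_TT (U : Set A) : rperp A (TT A U) = rperp A U := by
  refine (rperp_antitone (subset_TT U)).antisymm fun Y hY X hX => ?_
  have hU : U ⊆ lperp A {Y} := fun U' hU' _ hY' => by subst hY'; exact hY U' hU'
  exact TT_subset (isTorsionClass_lperp {Y}) hU hX Y rfl

theorem ses_cokernel_of_mono {X Y : A} (f : X ⟶ Y) [Mono f] : SES A f (cokernel.π f) :=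
  ⟨cokernel.condition f,
    .mk' (ShortComplex.exact_of_g_is_cokernel _ (cokernelIsCokernel f)) inferInstance
      inferInstance⟩

theorem exists_iso_of_torsion_ses {T : Set A} {T₁ T₂ X F₁ F₂ : A}
    {i₁ : T₁ ⟶ X} {p₁ : X ⟶ F₁} {i₂ : T₂ ⟶ X} {p₂ : X ⟶ F₂}
    (h₁ : SES A i₁ p₁) (h₂ : SES A i₂ p₂) (hT₁ : T₁ ∈ T) (hF₁ : F₁ ∈ rperp A T)
    (hT₂ : T₂ ∈ T) (hF₂ : F₂ ∈ rperp A T) :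
    ∃ e : T₁ ≅ T₂, e.hom ≫ i₂ = i₁ := by
  obtain ⟨_, h₁⟩ := h₁
  obtain ⟨_, h₂⟩ := h₂
  have := h₁.mono_f
  have := h₂.mono_f
  set u := h₂.exact.lift i₁ (hF₂ _ hT₁ _)
  set v := h₁.exact.lift i₂ (hF₁ _ hT₂ _)
  have hu : u ≫ i₂ = i₁ := h₂.exact.lift_f _ _
  have hv : v ≫ i₁ = i₂ := h₁.exact.lift_f _ _
  refine ⟨⟨u, v, ?_, ?_⟩, hu⟩
  · rw [← cancel_mono i₁, Category.assoc, hv, hu, Category.id_comp]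
  · rw [← cancel_mono i₂, Category.assoc, hu, hv, Category.id_comp]

variable {n : ℕ} {MM U : Set A} {X : A} {S : Seq A}

theorem IsNTorsionSequenceFor.mono_map_one (hS : IsNTorsionSequenceFor A n MM U X S) :
    Mono (S.map 1) := by
  obtain ⟨hz0, -, -, -, -, hex, -⟩ := hS
  obtain ⟨_, e01⟩ := hex 0 (Nat.zero_le _)
  exact e01.mono_g (hz0.eq_of_src _ _)

theorem IsNTorsionSequenceFor.cokernel_mem_rperp (hn : 1 ≤ n)
    (hS : IsNTorsionSequenceFor A n MM U X S) : cokernel (S.map 1) ∈ rperp A U := by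
  obtain ⟨-, -, -, -, -, hex, hhom⟩ := hS
  obtain ⟨w12, e12⟩ := hex 1 (by omega)
  obtain ⟨w23, _⟩ := hex 2 (by omega)
  set j := cokernel.desc (S.map 1) (S.map 2) w12
  have : Mono j := (ShortComplex.exact_iff_mono_cokernel_desc (.mk _ _ w12)).1 e12
  have hj : j ≫ S.map 3 = 0 := by
    rw [← cancel_epi (cokernel.π (S.map 1)), ← Category.assoc, cokernel.π_desc, w23, comp_zero]
  intro U' hU' f
  have hfj := hhom U' hU' 1 le_rfl hn (f ≫ j) fun _ => by
    rw [Category.assoc]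
    exact (congrArg (f ≫ ·) hj).trans comp_zero
  rw [if_pos rfl] at hfj
  rwa [← cancel_mono j, zero_comp]

end

theorem n_torsion_subobject_iso_torsion_subobject
    (n : ℕ) (hn : 1 ≤ n) (MM U : Set A)
    (X : A)
    (UX : A) (ι : UX ⟶ X) (hι : IsNTorsionSubobject A n MM U X UX ι)
    (tX fX : A) (ιt : tX ⟶ X) (p : X ⟶ fX)
    (ht : tX ∈ TT A U) (hf : fX ∈ rperp A (TT A U)) (hses : SES A ιt p) :
    ∃ e : UX ≅ tX, e.hom ≫ ιt = ι := by
  obtain ⟨S, rfl, rfl, hS, rfl⟩ := hι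
  simp only [eqToHom_refl, Category.id_comp, Category.comp_id]
  have := hS.mono_map_one
  have hUX : S.obj 1 ∈ U := hS.2.2.1
  refine exists_iso_of_torsion_ses (ses_cokernel_of_mono (S.map 1)) hses
    (subset_TT U hUX) ?_ ht hf
  rw [rperp_TT]
  exact hS.cokernel_mem_rperp hn

end TorsionPaper
end

section
/- Let U_1 ⊆ U_2 be two n-torsion classes in an n-abelian category M and X an object of M with n-torsion subobjects U_1^X and U_2^X with respect to U_1 and U_2. Then U_1^X is a subobject of U_2^X, and the n-torsion subobject of U_2^X with respect to U_1 is isomorphic to U_1^X. -/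
open CategoryTheory CategoryTheory.Limits

universe w v u u' v' uG

set_option linter.dupNamespace false

namespace TorsionPaper

variable (A : Type u) [Category.{v} A] [Abelian A]
variable {A}

variable (A)

/-! The `n`-torsion subobject `U^X ↪ X` is a monic right `U`-approximation of `X`, and both
claims follow from this universal property alone: for `U₁ ⊆ U₂` the inclusion `U₁^X ↪ X`
factors through `U₂^X`, and the composite `U₁^{U₂^X} ↪ U₂^X ↪ X` is again a monic right
`U₁`-approximation of `X`, hence isomorphic to `U₁^X`. -/

section

variable {C : Type*} [Category C]

structure IsMonicRightApproximation (U : Set C) {T X : C} (ι : T ⟶ X) : Prop where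
  mem : T ∈ U
  mono : Mono ι
  exists_lift : ∀ U' ∈ U, ∀ f : U' ⟶ X, ∃ g : U' ⟶ T, g ≫ ι = f

namespace IsMonicRightApproximation

variable {U₁ U₂ : Set C} {T₁ T₂ X : C} {ι₁ : T₁ ⟶ X} {ι₂ : T₂ ⟶ X}

theorem exists_mono_comp_eq (h₁ : IsMonicRightApproximation U₁ ι₁)
    (h₂ : IsMonicRightApproximation U₂ ι₂) (hsub : U₁ ⊆ U₂) :
    ∃ m : T₁ ⟶ T₂, Mono m ∧ m ≫ ι₂ = ι₁ := by
  obtain ⟨m, hm⟩ := h₂.exists_lift T₁ (hsub h₁.mem) ι₁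
  have : Mono (m ≫ ι₂) := hm ▸ h₁.mono
  exact ⟨m, mono_of_mono m ι₂, hm⟩

theorem comp {Y : C} {κ : Y ⟶ T₂} (hκ : IsMonicRightApproximation U₁ κ)
    (h₂ : IsMonicRightApproximation U₂ ι₂) (hsub : U₁ ⊆ U₂) :
    IsMonicRightApproximation U₁ (κ ≫ ι₂) where
  mem := hκ.mem
  mono := by
    have := hκ.mono
    have := h₂.mono
    infer_instance
  exists_lift U' hU' f := by
    obtain ⟨g, hg⟩ := h₂.exists_lift U' (hsub hU') f
    obtain ⟨g', hg'⟩ := hκ.exists_lift U' hU' g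
    exact ⟨g', by rw [← Category.assoc, hg', hg]⟩

theorem nonempty_iso (h₁ : IsMonicRightApproximation U₁ ι₁)
    (h₂ : IsMonicRightApproximation U₁ ι₂) : Nonempty (T₁ ≅ T₂) := by
  obtain ⟨a, ha⟩ := h₂.exists_lift T₁ h₁.mem ι₁
  obtain ⟨b, hb⟩ := h₁.exists_lift T₂ h₂.mem ι₂
  have := h₁.mono
  have := h₂.mono
  refine ⟨⟨a, b, ?_, ?_⟩⟩
  · exact (cancel_mono ι₁).1 (by rw [Category.assoc, hb, ha, Category.id_comp])
  · exact (cancel_mono ι₂).1 (by rw [Category.assoc, ha, hb, Category.id_comp])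

end IsMonicRightApproximation

end

variable {A}

namespace IsNTorsionSequenceFor

variable {n : ℕ} {MM U : Set A} {X : A} {S : Seq A}

theorem mono_map_one_s12 (h : IsNTorsionSequenceFor A n MM U X S) : Mono (S.map 1) := by
  obtain ⟨_, hexact⟩ := h.2.2.2.2.2.1 0 (Nat.zero_le _)
  exact hexact.mono_g (h.1.eq_of_src _ _)

/-- The condition `Hom(U', V¹) ↪ Hom(U', V²)` (`n ≥ 1`) makes `S.map 2` kill every morphism
from `U' ∈ U`, and exactness at `X` then lifts it to `U^X`. -/
theorem exists_lift (hn : 1 ≤ n) (h : IsNTorsionSequenceFor A n MM U X S)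
    {U' : A} (hU' : U' ∈ U) (f : U' ⟶ S.obj 2) : ∃ g : U' ⟶ S.obj 1, g ≫ S.map 1 = f := by
  have := h.mono_map_one_s12
  obtain ⟨_, _, _, _, _, hex, hhom⟩ := h
  obtain ⟨hzero₂₃, _⟩ := hex 2 (by omega)
  have hf : f ≫ S.map 2 = 0 := by
    simpa using hhom U' hU' 1 le_rfl hn (f ≫ S.map 2)
      (fun _ => by rw [Category.assoc, hzero₂₃, comp_zero])
  obtain ⟨_, hexact⟩ := hex 1 (by omega)
  exact ⟨hexact.lift f hf, hexact.lift_f f hf⟩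

theorem isMonicRightApproximation (hn : 1 ≤ n) (h : IsNTorsionSequenceFor A n MM U X S) :
    IsMonicRightApproximation U (S.map 1) where
  mem := h.2.2.1
  mono := h.mono_map_one_s12
  exists_lift _ hU' f := h.exists_lift hn hU' f

end IsNTorsionSequenceFor

theorem IsNTorsionSubobject.isMonicRightApproximation {n : ℕ} (hn : 1 ≤ n) {MM U : Set A}
    {X UX : A} {ι : UX ⟶ X} (h : IsNTorsionSubobject A n MM U X UX ι) :
    IsMonicRightApproximation U ι := by
  obtain ⟨S, rfl, rfl, hS, rfl⟩ := h
  simpa using hS.isMonicRightApproximation hn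

theorem n_torsion_subobjects_nested_general
    (n : ℕ) (hn : 1 ≤ n) (MM : Set A)
    (U₁ U₂ : Set A)
    (hsub : U₁ ⊆ U₂) (X : A)
    (U1X U2X : A) (ι₁ : U1X ⟶ X) (ι₂ : U2X ⟶ X)
    (h₁ : IsNTorsionSubobject A n MM U₁ X U1X ι₁)
    (h₂ : IsNTorsionSubobject A n MM U₂ X U2X ι₂) :
    (∃ m : U1X ⟶ U2X, Mono m ∧ m ≫ ι₂ = ι₁) ∧
    (∀ (Y : A) (κ : Y ⟶ U2X), IsNTorsionSubobject A n MM U₁ U2X Y κ →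
      Nonempty (Y ≅ U1X)) := by
  have hι₁ := h₁.isMonicRightApproximation hn
  have hι₂ := h₂.isMonicRightApproximation hn
  refine ⟨hι₁.exists_mono_comp_eq hι₂ hsub, fun Y κ hκ => ?_⟩
  exact ((hκ.isMonicRightApproximation hn).comp hι₂ hsub).nonempty_iso hι₁

/-- Lemma 4.2. If `U₁ ⊆ U₂` are `n`-torsion classes in the
`n`-abelian category `MM` and `X ∈ MM`, then the `n`-torsion subobject `U₁^X` is a
subobject of `U₂^X` (compatibly with the inclusions into `X`), and the `n`-torsion
subobject of `U₂^X` with respect to `U₁` is isomorphic to `U₁^X`. -/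
theorem n_torsion_subobjects_nested
    [HasExt.{w} A] [EssentiallySmall.{v} A] (hlen : IsLengthCategory A)
    (n : ℕ) (hn : 1 ≤ n) (MM : Set A) (hM : IsNClusterTilting A n MM)
    (U₁ U₂ : Set A) (hU₁ : IsNTorsionClass A n MM U₁) (hU₂ : IsNTorsionClass A n MM U₂)
    (hsub : U₁ ⊆ U₂) (X : A) (hX : X ∈ MM)
    (U1X U2X : A) (ι₁ : U1X ⟶ X) (ι₂ : U2X ⟶ X)
    (h₁ : IsNTorsionSubobject A n MM U₁ X U1X ι₁)
    (h₂ : IsNTorsionSubobject A n MM U₂ X U2X ι₂) :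
    (∃ m : U1X ⟶ U2X, Mono m ∧ m ≫ ι₂ = ι₁) ∧
    (∀ (Y : A) (κ : Y ⟶ U2X), IsNTorsionSubobject A n MM U₁ U2X Y κ →
      Nonempty (Y ≅ U1X)) :=
  n_torsion_subobjects_nested_general n hn MM U₁ U₂ hsub X U1X U2X ι₁ ι₂ h₁ h₂

end TorsionPaper
end
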